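/- arXiv:1803.04082 — 5 statements merged into one kernel-verified Lean document; each statement's English description precedes it below -/
import Mathlib

section
/- Let σ : ℙ¹(ℂ) → ℙ¹(ℂ) be the involution induced by the conjugate-linear map (z,w) ↦ (z̄,w̄) of ℂ², and for A ∈ GL₂(ℂ) let m_A : ℙ¹(ℂ) → ℙ¹(ℂ) be the Möbius transformation induced by A. Let f, g : ℙ¹(ℂ) → ℙ¹(ℂ) be functions satisfying f ∘ σ = σ ∘ f and g ∘ σ = σ ∘ g (this encodes that f and g are defined over ℝ), and assume f has trivial Möbius automorphism group: for every A ∈ GL₂(ℂ), if m_A ∘ f = f ∘ m_A then m_A is the identity of ℙ¹(ℂ). If there exists A ∈ GL₂(ℂ) with g = m_A ∘ f ∘ m_A⁻¹, then there exists B ∈ GL₂(ℂ) all of whose matrix entries are real such that g = m_B ∘ f ∘ m_B⁻¹. -/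
open Projectivization Matrix
open scoped LinearAlgebra.Projectivization

/-- The conjugate-linear map of `ℂ²` given by coordinatewise complex conjugation. -/
noncomputable def conjSemilinear : (Fin 2 → ℂ) →ₛₗ[starRingEnd ℂ] (Fin 2 → ℂ) where
  toFun v := fun i => starRingEnd ℂ (v i)
  map_add' := by intro x y; funext i; simp
  map_smul' := by intro c x; funext i; simp [Pi.smul_apply, smul_eq_mul]

lemma conjSemilinear_injective : Function.Injective conjSemilinear := by
  intro x y h
  funext i
  have h' : starRingEnd ℂ (x i) = starRingEnd ℂ (y i) := congrFun h i
  exact (starRingEnd ℂ).injective h'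

/-- The involution of `ℙ¹(ℂ)` induced by coordinatewise complex conjugation of `ℂ²`. -/
noncomputable def projConj : ℙ ℂ (Fin 2 → ℂ) → ℙ ℂ (Fin 2 → ℂ) :=
  Projectivization.map conjSemilinear conjSemilinear_injective

/-- The Möbius transformation of `ℙ¹(ℂ)` induced by a matrix `A ∈ GL₂(ℂ)`. -/
noncomputable def mob (A : GL (Fin 2) ℂ) : ℙ ℂ (Fin 2 → ℂ) → ℙ ℂ (Fin 2 → ℂ) :=
  Projectivization.map
    ((Matrix.GeneralLinearGroup.toLin A).toLinearEquiv.toLinearMap)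
    (Matrix.GeneralLinearGroup.toLin A).toLinearEquiv.injective

/-!
If `g = m_A ∘ f ∘ m_A⁻¹` and `f`, `g` commute with `σ`, conjugating by `σ` gives also
`g = m_Ā ∘ f ∘ m_Ā⁻¹`, so `m_{Ā⁻¹A}` commutes with `f` and is the identity. As `PGL₂(ℂ)` acts
faithfully on `ℙ¹(ℂ)`, `Ā = u • A` for some `u ∈ ℂˣ`. Multiplying `A` by the conjugate of one of
its nonzero entries then yields a real matrix inducing the same Möbius transformation.
-/

open scoped MatrixGroups
open Matrix.GeneralLinearGroup (scalar)

namespace Projectivization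

variable {K ι : Type*} [Field K] [Fintype ι] [DecidableEq ι]

theorem mem_center_of_forall_smul_eq {C : GL ι K} (h : ∀ x : ℙ K (ι → K), C • x = x) :
    C ∈ Subgroup.center (GL ι K) := by
  obtain ⟨a, ha⟩ :=
    (Matrix.toLin' (C : Matrix ι ι K)).exists_eq_smul_id_of_forall_notLinearIndependent fun v ↦ by
      by_cases hv : v = 0
      · simp [hv, linearIndependent_fin2]
      · simpa [LinearIndependent.pair_iff' hv, mk_eq_mk_iff', Units.smul_def] using h (mk K v hv)
  have hC : (C : Matrix ι ι K) = Matrix.scalar ι a := by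
    rw [← LinearMap.toMatrix'_toLin' (C : Matrix ι ι K), ha]
    exact LinearMap.toMatrix'_algebraMap a
  refine Subgroup.mem_center_iff.2 fun g ↦ Units.ext ?_
  simp only [Units.val_mul, hC]
  exact (Matrix.scalar_commute a (Commute.all a) _).symm

instance : FaithfulSMul PGL(ι, K) (ℙ K (ι → K)) :=
  faithfulSMul_iff.2 fun p hp ↦ by
    induction p using ProjGenLinGroup.induction_on with
    | mk C => exact ProjGenLinGroup.mk_eq_one.2 (mem_center_of_forall_smul_eq hp)

end Projectivization

theorem MulAction.inv_mul_smul_comp_comm_of_conj_eq {G X : Type*} [Group G] [MulAction G X]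
    {f : X → X} {a b : G} (h : (fun x ↦ a • f (a⁻¹ • x)) = fun x ↦ b • f (b⁻¹ • x)) :
    ((b⁻¹ * a) • ·) ∘ f = f ∘ ((b⁻¹ * a) • ·) := by
  funext x
  have hx := congrFun h (a • x)
  simp only [inv_smul_smul] at hx
  simp only [Function.comp_apply, mul_smul, hx, inv_smul_smul]

lemma Matrix.GeneralLinearGroup.mul_scalar_apply {n R : Type*} [Fintype n] [DecidableEq n]
    [CommRing R] (A : GL n R) (u : Rˣ) (i j : n) :
    ((A * scalar n u : GL n R) : Matrix n n R) i j = (A : Matrix n n R) i j * u := by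
  simp only [Units.val_mul, coe_scalar, Matrix.scalar_apply, Matrix.mul_diagonal]

theorem Matrix.exists_mul_im_eq_zero_of_conj_eq_mul {m n : Type*} {M : Matrix m n ℂ} (hM : M ≠ 0)
    {c : ℂ} (h : ∀ i j, starRingEnd ℂ (M i j) = M i j * c) :
    ∃ μ : ℂ, μ ≠ 0 ∧ ∀ i j, (M i j * μ).im = 0 := by
  obtain ⟨k, l, hkl⟩ : ∃ k l, M k l ≠ 0 := by
    by_contra! h0
    exact hM (Matrix.ext h0)
  refine ⟨starRingEnd ℂ (M k l), by simpa using hkl, fun i j ↦ ?_⟩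
  rw [← Complex.conj_eq_iff_im, map_mul, h i j, Complex.conj_conj, h k l]
  ring

lemma mob_eq_pgl_smul (A : GL (Fin 2) ℂ) : mob A = (ProjGenLinGroup.mk A • ·) := rfl

lemma mob_mul_scalar (A : GL (Fin 2) ℂ) (u : ℂˣ) : mob (A * scalar _ u) = mob A := by
  rw [mob_eq_pgl_smul, map_mul, ProjGenLinGroup.mk_scalar, mul_one, mob_eq_pgl_smul]

lemma mob_inv_mul_scalar (A : GL (Fin 2) ℂ) (u : ℂˣ) : mob (A * scalar _ u)⁻¹ = mob A⁻¹ := by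
  rw [mob_eq_pgl_smul, map_inv, map_mul, ProjGenLinGroup.mk_scalar, mul_one, ← map_inv,
    mob_eq_pgl_smul]

lemma Matrix.ProjGenLinGroup.mk_eq_one_of_mob_eq_id {C : GL (Fin 2) ℂ} (h : mob C = id) :
    mk C = 1 :=
  eq_of_smul_eq_smul fun x ↦ (congrFun h x).trans (one_smul _ x).symm

lemma projConj_involutive : Function.Involutive projConj := by
  intro x
  induction x using Projectivization.ind with
  | h v hv =>
    simp only [projConj, map_mk]
    congr 1
    funext i
    simp [conjSemilinear]

lemma projConj_smul (A : GL (Fin 2) ℂ) (x : ℙ ℂ (Fin 2 → ℂ)) :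
    projConj (A • x) = GeneralLinearGroup.map (starRingEnd ℂ) A • projConj x := by
  induction x using Projectivization.ind with
  | h v hv =>
    simp only [projConj, map_mk, smul_mk]
    congr 1
    funext i
    exact RingHom.map_mulVec (starRingEnd ℂ) _ v i

theorem mob_comp_comp_mob_inv_eq_of_projConj_comm {f : ℙ ℂ (Fin 2 → ℂ) → ℙ ℂ (Fin 2 → ℂ)}
    (hf : f ∘ projConj = projConj ∘ f) {A : GL (Fin 2) ℂ}
    (h : (mob A ∘ f ∘ mob A⁻¹) ∘ projConj = projConj ∘ (mob A ∘ f ∘ mob A⁻¹)) :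
    mob A ∘ f ∘ mob A⁻¹ =
      mob (GeneralLinearGroup.map (starRingEnd ℂ) A) ∘ f ∘
        mob (GeneralLinearGroup.map (starRingEnd ℂ) A)⁻¹ := by
  funext x
  have hx := congrFun h (projConj x)
  simp only [Function.comp_apply, projConj_involutive x] at hx ⊢
  rw [hx]
  show projConj (A • f (A⁻¹ • projConj x)) = _
  rw [projConj_smul, ← Function.comp_apply (f := projConj), ← hf, Function.comp_apply,
    projConj_smul, projConj_involutive x, map_inv]
  rfl

/-- Two real rational maps (encoded as `σ`-equivariant self-maps of `ℙ¹(ℂ)`), the first with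
trivial Möbius automorphism group, which are `PGL₂(ℂ)`-conjugate are already
`PGL₂(ℝ)`-conjugate. -/
theorem real_conjugacy_of_complex_conjugacy
    (f g : ℙ ℂ (Fin 2 → ℂ) → ℙ ℂ (Fin 2 → ℂ))
    (hf : f ∘ projConj = projConj ∘ f)
    (hg : g ∘ projConj = projConj ∘ g)
    (htriv : ∀ A : GL (Fin 2) ℂ, mob A ∘ f = f ∘ mob A → mob A = id)
    (hconj : ∃ A : GL (Fin 2) ℂ, g = mob A ∘ f ∘ mob A⁻¹) :
    ∃ B : GL (Fin 2) ℂ, (∀ i j, ((B : Matrix (Fin 2) (Fin 2) ℂ) i j).im = 0) ∧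
      g = mob B ∘ f ∘ mob B⁻¹ := by
  obtain ⟨A, rfl⟩ := hconj
  set A' := GeneralLinearGroup.map (starRingEnd ℂ) A
  have hcomm : mob (A'⁻¹ * A) ∘ f = f ∘ mob (A'⁻¹ * A) :=
    MulAction.inv_mul_smul_comp_comm_of_conj_eq (a := A) (b := A')
      (mob_comp_comp_mob_inv_eq_of_projConj_comm hf hg)
  obtain ⟨u, hu⟩ : ∃ u : ℂˣ, A * scalar _ u = A' := by
    rw [← ProjGenLinGroup.mk_eq_mk_iff, eq_comm, ← inv_mul_eq_one, ← map_inv, ← map_mul]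
    exact ProjGenLinGroup.mk_eq_one_of_mob_eq_id (htriv _ hcomm)
  have hA_conj : ∀ i j, starRingEnd ℂ ((A : Matrix (Fin 2) (Fin 2) ℂ) i j) =
      (A : Matrix (Fin 2) (Fin 2) ℂ) i j * u := fun i j ↦ by
    rw [← GeneralLinearGroup.mul_scalar_apply, hu, GeneralLinearGroup.map_apply]
  obtain ⟨μ, hμ, hreal⟩ := Matrix.exists_mul_im_eq_zero_of_conj_eq_mul (Units.ne_zero A) hA_conj
  refine ⟨A * scalar _ (Units.mk0 μ hμ), fun i j ↦ ?_, by rw [mob_mul_scalar, mob_inv_mul_scalar]⟩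
  rw [GeneralLinearGroup.mul_scalar_apply, Units.val_mk0]
  exact hreal i j
end

section
/- Let p, q ∈ ℂ[X] be coprime polynomials and set d := max(deg p, deg q); assume d ≥ 2. Let n ≥ 1 and let ζ ∈ ℂ be a primitive n-th root of unity, and suppose p(ζX)·q(X) = ζ·p(X)·q(ζX) as polynomials (this says that the degree-d rational map f = p/q commutes with the rotation ω(z) = ζz, i.e. ω lies in the Möbius automorphism group of f). Then n ≤ d + 1. -/
/-!
By coprimality, `p(ζX) q = ζ p q(ζX)` forces `p(ζX) ∣ p` and `q(ζX) ∣ q`; comparing degrees and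
leading coefficients, `p(ζX) = ζ^(deg p) p` and `q(ζX) = ζ^(deg q) q`, so `ζ^(deg p) = ζ^(deg q + 1)`.
If `n > d + 1`, these exponents are below `n`, hence `deg p = deg q + 1 = d ≥ 2`. A nonzero
constant coefficient of `p` would give `ζ^(deg p) = 1`, and likewise for `q`; so `X` divides both
`p` and `q`, contradicting coprimality.
-/

open Polynomial

namespace Polynomial

variable {R : Type*} [CommRing R] [IsDomain R] {p : R[X]}

lemma natDegree_comp_C_mul_X {a : R} (ha : a ≠ 0) :
    (p.comp (C a * X)).natDegree = p.natDegree := by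
  rw [natDegree_comp, natDegree_C_mul_X a ha, mul_one]

lemma comp_C_mul_X_eq_C_mul_of_dvd {a : R} (ha : a ≠ 0) (h : p.comp (C a * X) ∣ p) :
    p.comp (C a * X) = C (a ^ p.natDegree) * p := by
  refine eq_of_dvd_of_natDegree_le_of_leadingCoeff (dvd_mul_of_dvd_right h _) ?_ ?_
  · rw [natDegree_C_mul (pow_ne_zero _ ha), natDegree_comp_C_mul_X ha]
  · rw [leadingCoeff, natDegree_comp_C_mul_X ha, comp_C_mul_X_coeff, leadingCoeff_mul,
      leadingCoeff_C, mul_comm, leadingCoeff]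

lemma pow_eq_of_comp_C_mul_X_eq {a u : R} (h : p.comp (C a * X) = C u * p) {k : ℕ}
    (hk : p.coeff k ≠ 0) : a ^ k = u := by
  have hcoeff := congrArg (coeff · k) h
  simp only [comp_C_mul_X_coeff, coeff_C_mul] at hcoeff
  exact mul_left_cancel₀ hk (by rw [hcoeff, mul_comm])

lemma X_dvd_of_comp_C_mul_X_eq {ζ : R} {n k : ℕ} (hζ : IsPrimitiveRoot ζ n) (hk : k ≠ 0)
    (hkn : k < n) (h : p.comp (C ζ * X) = C (ζ ^ k) * p) : X ∣ p := by
  refine X_dvd_iff.mpr (by_contra fun h0 ↦ hζ.pow_ne_one_of_pos_of_lt hk hkn ?_)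
  rw [← pow_eq_of_comp_C_mul_X_eq h h0, pow_zero]

end Polynomial

theorem order_of_rotation_automorphism_le_general
    (p q : Polynomial ℂ) (hpq : IsCoprime p q)
    (d : ℕ) (hd : d = max p.natDegree q.natDegree) (hd2 : 2 ≤ d)
    (n : ℕ) (ζ : ℂ) (hζ : IsPrimitiveRoot ζ n)
    (hcomm : p.comp (C ζ * X) * q = C ζ * (p * q.comp (C ζ * X))) :
    n ≤ d + 1 := by
  by_contra! hnd
  have hζ0 : ζ ≠ 0 := hζ.ne_zero (by omega)
  have hp0 : p ≠ 0 := by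
    rintro rfl
    simp [natDegree_eq_zero_of_isUnit (isCoprime_zero_left.mp hpq)] at hd
    omega
  have hq0 : q ≠ 0 := by
    rintro rfl
    simp [natDegree_eq_zero_of_isUnit (isCoprime_zero_right.mp hpq)] at hd
    omega
  have hcop : IsCoprime (p.comp (C ζ * X)) (q.comp (C ζ * X)) := hpq.map (compRingHom (C ζ * X))
  have hP : p.comp (C ζ * X) = C (ζ ^ p.natDegree) * p := by
    refine comp_C_mul_X_eq_C_mul_of_dvd hζ0 (hcop.dvd_of_dvd_mul_right ?_)
    rw [← (isUnit_C.mpr hζ0.isUnit).dvd_mul_left, ← hcomm]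
    exact dvd_mul_right _ _
  have hQ : q.comp (C ζ * X) = C (ζ ^ q.natDegree) * q := by
    refine comp_C_mul_X_eq_C_mul_of_dvd hζ0 (hcop.symm.dvd_of_dvd_mul_left ?_)
    rw [hcomm]
    exact dvd_mul_of_dvd_right (dvd_mul_left _ _) _
  have hdeg : p.natDegree = q.natDegree + 1 := by
    refine hζ.pow_inj (by omega) (by omega) <|
      C_injective (mul_right_cancel₀ (mul_ne_zero hp0 hq0) ?_)
    rw [hP, hQ] at hcomm
    rw [pow_succ, C_mul]
    linear_combination hcomm
  exact not_isUnit_X <| hpq.isUnit_of_dvd'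
    (X_dvd_of_comp_C_mul_X_eq hζ (by omega) (by omega) hP)
    (X_dvd_of_comp_C_mul_X_eq hζ (by omega) (by omega) hQ)

/-- If the degree-`d` rational map `p/q` (with `p, q` coprime, `d = max(deg p, deg q) ≥ 2`)
commutes with the rotation `z ↦ ζz` for a primitive `n`-th root of unity `ζ`, then
`n ≤ d + 1`. -/
theorem order_of_rotation_automorphism_le
    (p q : Polynomial ℂ) (hpq : IsCoprime p q)
    (d : ℕ) (hd : d = max p.natDegree q.natDegree) (hd2 : 2 ≤ d)
    (n : ℕ) (hn : 1 ≤ n) (ζ : ℂ) (hζ : IsPrimitiveRoot ζ n)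
    (hcomm : p.comp (C ζ * X) * q = C ζ * (p * q.comp (C ζ * X))) :
    n ≤ d + 1 :=
  order_of_rotation_automorphism_le_general p q hpq d hd hd2 n ζ hζ hcomm
end

section
/- Let d ≥ 1 and let p, q ∈ ℂ[X] be coprime polynomials with deg p = deg q = d such that ‖p(z)‖ = ‖q(z)‖ for every z ∈ ℂ with ‖z‖ = 1 (i.e., the degree-d rational map f = p/q maps the unit circle into itself and has no zero or pole at ∞). Then there exist c ∈ ℂ with |c| = 1 and points a₁, …, a_d ∈ ℂ with aᵢ ≠ 0 and |aᵢ| ≠ 1 for every i, such that p(X)·∏_{i=1}^{d}(1 − conj(aᵢ)·X) = c·q(X)·∏_{i=1}^{d}(X − aᵢ) in ℂ[X]; equivalently, f(z) = c·∏_{i=1}^{d} (z − aᵢ)/(1 − conj(aᵢ)·z) wherever defined. -/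
open Polynomial Finset

/-!
Write `f* = conjReverse f` for the reflection `X ^ deg f · conj (f (1 / conj X))` of a
polynomial `f` in the unit circle. On the circle `f* z = z ^ deg f · conj (f z)`, so `‖p‖ = ‖q‖`
there turns into the polynomial identity `p p* = q q*`. As `q` is coprime to `p`, it divides
`p*`, which has degree at most `d = deg q`; hence `p* = u q` with `u` a constant, of modulus one
by comparing norms on the circle. Factoring `p = t ∏ (X - aᵢ)` gives
`p* = conj t ∏ (1 - conj aᵢ X)`, and the identity follows with `c = t u / conj t`. No `aᵢ`
vanishes because `p*` has full degree `d`, and no `aᵢ` lies on the circle because there it would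
also be a root of `q`.
-/

theorem Complex.sphere_zero_one_infinite : (Metric.sphere (0 : ℂ) 1).Infinite :=
  (isPreconnected_sphere (by simp) 0 1).infinite_of_nontrivial
    ⟨1, by simp, -1, by simp, by norm_num⟩

namespace Polynomial

theorem reverse_prod {R ι : Type*} [CommSemiring R] [NoZeroDivisors R] (s : Finset ι)
    (f : ι → R[X]) : (∏ i ∈ s, f i).reverse = ∏ i ∈ s, (f i).reverse := by
  induction s using Finset.cons_induction with
  | empty => rw [prod_empty, prod_empty, ← C_1, reverse_C]
  | cons i s hi ih => rw [prod_cons, prod_cons, reverse_mul_of_domain, ih]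

theorem reverse_X_sub_C {R : Type*} [CommRing R] [Nontrivial R] (b : R) :
    (X - C b).reverse = 1 - C b * X := by
  rw [sub_eq_add_neg, ← C_neg, reverse_add_C, ← mul_one X, reverse_X_mul, ← C_1, reverse_C]
  simp [sub_eq_add_neg]

theorem exists_eq_C_leadingCoeff_mul_prod_X_sub_C {K : Type*} [Field K] [IsAlgClosed K]
    {p : K[X]} {n : ℕ} (hn : p.natDegree = n) :
    ∃ a : Fin n → K, p = C p.leadingCoeff * ∏ i, (X - C (a i)) := by
  have hlen : p.roots.toList.length = n := by
    rw [Multiset.length_toList, IsAlgClosed.card_roots_eq_natDegree, hn]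
  refine ⟨fun i => p.roots.toList[(i.cast hlen.symm).1], ?_⟩
  rw [Fin.prod_congr' (fun i => X - C p.roots.toList[i.1]) hlen.symm,
    Fin.prod_univ_fun_getElem p.roots.toList (X - C ·), ← Multiset.prod_coe, ← Multiset.map_coe,
    Multiset.coe_toList, C_leadingCoeff_mul_prod_multiset_X_sub_C
      IsAlgClosed.card_roots_eq_natDegree]

section ConjReverse

variable {𝕜 : Type*} [RCLike 𝕜]

noncomputable def conjReverse (f : 𝕜[X]) : 𝕜[X] :=
  (f.map (starRingEnd 𝕜)).reverse

theorem conjReverse_ne_zero {f : 𝕜[X]} (hf : f ≠ 0) : f.conjReverse ≠ 0 := by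
  simpa [conjReverse] using hf

theorem natDegree_conjReverse_le (f : 𝕜[X]) : f.conjReverse.natDegree ≤ f.natDegree :=
  (reverse_natDegree_le _).trans (natDegree_map _).le

theorem coeff_conjReverse_natDegree (f : 𝕜[X]) :
    f.conjReverse.coeff f.natDegree = starRingEnd 𝕜 (f.coeff 0) := by
  rw [conjReverse, coeff_reverse, natDegree_map, revAt_le le_rfl, Nat.sub_self, coeff_map]

theorem eval_conjReverse_of_norm_eq_one (f : 𝕜[X]) {z : 𝕜} (hz : ‖z‖ = 1) :
    f.conjReverse.eval z = z ^ f.natDegree * starRingEnd 𝕜 (f.eval z) := by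
  have hz0 : starRingEnd 𝕜 z ≠ 0 := by
    rw [Ne, map_eq_zero]; rintro rfl; simp at hz
  let _ : Invertible (starRingEnd 𝕜 z) := invertibleOfNonzero hz0
  have key := eval₂_reverse_mul_pow (RingHom.id 𝕜) (starRingEnd 𝕜 z) (f.map (starRingEnd 𝕜))
  have hinv : (starRingEnd 𝕜 z)⁻¹ = z := by rw [← RCLike.inv_eq_conj hz, inv_inv]
  rw [invOf_eq_inv, hinv, natDegree_map, ← eval, ← eval, eval_map, eval₂_at_apply] at key
  have hzz : z * starRingEnd 𝕜 z = 1 := by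
    rw [RCLike.mul_conj, hz]; simp
  calc f.conjReverse.eval z = f.conjReverse.eval z * (z * starRingEnd 𝕜 z) ^ f.natDegree := by
        rw [hzz, one_pow, mul_one]
    _ = z ^ f.natDegree * starRingEnd 𝕜 (f.eval z) := by
        rw [← key, conjReverse]; ring

theorem conjReverse_C_mul_prod_X_sub_C {ι : Type*} (t : 𝕜) (s : Finset ι) (a : ι → 𝕜) :
    (C t * ∏ i ∈ s, (X - C (a i))).conjReverse =
      C (starRingEnd 𝕜 t) * ∏ i ∈ s, (1 - C (starRingEnd 𝕜 (a i)) * X) := by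
  simp only [conjReverse, Polynomial.map_mul, Polynomial.map_prod, Polynomial.map_sub, map_X,
    map_C, reverse_mul_of_domain, reverse_C, reverse_prod, reverse_X_sub_C]

theorem coeff_zero_ne_zero_of_mul_C_eq_conjReverse {p q : 𝕜[X]} {u : 𝕜}
    (hdeg : p.natDegree = q.natDegree) (hq0 : q ≠ 0) (hu0 : u ≠ 0)
    (h : q * C u = p.conjReverse) : p.coeff 0 ≠ 0 := by
  have hlead := coeff_conjReverse_natDegree p
  rw [← h, coeff_mul_C, hdeg, ← leadingCoeff] at hlead
  intro h0
  rw [h0, map_zero] at hlead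
  exact mul_ne_zero (leadingCoeff_ne_zero.mpr hq0) hu0 hlead

end ConjReverse

theorem mul_conjReverse_eq_of_norm_eval_eq {p q : ℂ[X]} (hdeg : p.natDegree = q.natDegree)
    (hcirc : ∀ z : ℂ, ‖z‖ = 1 → ‖p.eval z‖ = ‖q.eval z‖) :
    p * p.conjReverse = q * q.conjReverse := by
  refine eq_of_infinite_eval_eq _ _ (Complex.sphere_zero_one_infinite.mono fun z hz => ?_)
  rw [mem_sphere_zero_iff_norm] at hz
  simp only [Set.mem_ofPred_eq, eval_mul, eval_conjReverse_of_norm_eq_one _ hz, hdeg,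
    mul_left_comm _ (z ^ _), RCLike.mul_conj, hcirc z hz]

theorem exists_mul_C_eq_conjReverse {p q : ℂ[X]} (hpq : IsCoprime p q)
    (hdeg : p.natDegree = q.natDegree) (hcirc : ∀ z : ℂ, ‖z‖ = 1 → ‖p.eval z‖ = ‖q.eval z‖)
    (hp0 : p ≠ 0) (hq0 : q ≠ 0) : ∃ u : ℂ, ‖u‖ = 1 ∧ q * C u = p.conjReverse := by
  have hdvd : q ∣ p.conjReverse :=
    hpq.symm.dvd_of_dvd_mul_left ⟨_, mul_conjReverse_eq_of_norm_eval_eq hdeg hcirc⟩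
  obtain ⟨w, hw⟩ := associated_of_dvd_of_natDegree_le hdvd (conjReverse_ne_zero hp0)
    ((natDegree_conjReverse_le p).trans hdeg.le)
  obtain ⟨u, -, hu⟩ := isUnit_iff.mp w.isUnit
  rw [← hu] at hw
  refine ⟨u, ?_, hw⟩
  obtain ⟨z, hz, hqz⟩ :=
    (Complex.sphere_zero_one_infinite.sdiff (finite_setOfPred_isRoot hq0)).nonempty
  rw [mem_sphere_zero_iff_norm] at hz
  have hnorm := congrArg (‖eval z ·‖) hw
  simp only [eval_mul, eval_C, norm_mul, eval_conjReverse_of_norm_eq_one _ hz, norm_pow, hz,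
    one_pow, one_mul, RCLike.norm_conj, hcirc z hz] at hnorm
  exact (mul_eq_left₀ (norm_ne_zero_iff.mpr hqz)).mp hnorm

theorem norm_ne_one_of_isRoot_of_isCoprime {p q : ℂ[X]} (hpq : IsCoprime p q)
    (hcirc : ∀ z : ℂ, ‖z‖ = 1 → ‖p.eval z‖ = ‖q.eval z‖) {a : ℂ} (ha : p.IsRoot a) :
    ‖a‖ ≠ 1 := by
  intro h1
  have hqa : q.IsRoot a := by simpa [ha.eq_zero] using (hcirc a h1).symm
  simpa [ha.eq_zero, hqa.eq_zero] using aeval_ne_zero_of_isCoprime hpq a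

end Polynomial

/-- A degree-`d` rational map `p/q` (with `p, q` coprime of degree `d ≥ 1`) preserving the unit
circle, i.e. `‖p(z)‖ = ‖q(z)‖` whenever `‖z‖ = 1`, is a Blaschke-type product: there are `c` of
modulus one and nonzero points `a₁, …, a_d` off the unit circle with
`p(X)·∏ᵢ (1 − conj(aᵢ)·X) = c·q(X)·∏ᵢ (X − aᵢ)`. -/
theorem circle_preserving_is_blaschke_product
    (d : ℕ) (hd : 1 ≤ d) (p q : Polynomial ℂ) (hpq : IsCoprime p q)
    (hp : p.natDegree = d) (hq : q.natDegree = d)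
    (hcirc : ∀ z : ℂ, ‖z‖ = 1 → ‖p.eval z‖ = ‖q.eval z‖) :
    ∃ (c : ℂ) (a : Fin d → ℂ), ‖c‖ = 1 ∧ (∀ i, a i ≠ 0) ∧ (∀ i, ‖a i‖ ≠ 1) ∧
      p * ∏ i : Fin d, (1 - C (starRingEnd ℂ (a i)) * X) =
        C c * q * ∏ i : Fin d, (X - C (a i)) := by
  have hp0 : p ≠ 0 := by rintro rfl; rw [natDegree_zero] at hp; omega
  have hq0 : q ≠ 0 := by rintro rfl; rw [natDegree_zero] at hq; omega
  have hdeg : p.natDegree = q.natDegree := hp.trans hq.symm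
  obtain ⟨u, hu1, hu⟩ := exists_mul_C_eq_conjReverse hpq hdeg hcirc hp0 hq0
  have hcoeff : p.coeff 0 ≠ 0 :=
    coeff_zero_ne_zero_of_mul_C_eq_conjReverse hdeg hq0 (by rintro rfl; simp at hu1) hu
  obtain ⟨a, ha⟩ := exists_eq_C_leadingCoeff_mul_prod_X_sub_C hp
  have hroot : ∀ i, p.IsRoot (a i) := fun i => by
    rw [ha, IsRoot, eval_mul, eval_prod]
    exact mul_eq_zero_of_right _ (prod_eq_zero (mem_univ i) (by simp))
  set t := p.leadingCoeff
  have ht : t ≠ 0 := leadingCoeff_ne_zero.mpr hp0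
  refine ⟨t * u / starRingEnd ℂ t, a, ?_, fun i h0 => hcoeff ?_,
    fun i => norm_ne_one_of_isRoot_of_isCoprime hpq hcirc (hroot i), ?_⟩
  · rw [norm_div, norm_mul, RCLike.norm_conj, hu1, mul_one, div_self (norm_ne_zero_iff.mpr ht)]
  · simpa [h0, coeff_zero_eq_eval_zero] using (hroot i).eq_zero
  · rw [ha, conjReverse_C_mul_prod_X_sub_C] at hu
    set P := ∏ i, (X - C (a i))
    set R := ∏ i, (1 - C (starRingEnd ℂ (a i)) * X)
    have hinv : C (starRingEnd ℂ t)⁻¹ * C (starRingEnd ℂ t) = 1 := by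
      rw [← C_mul, inv_mul_cancel₀ (by simpa using ht), C_1]
    rw [ha, div_eq_mul_inv, C_mul, C_mul]
    linear_combination -(C t * P * R) * hinv - C t * P * C (starRingEnd ℂ t)⁻¹ * hu
end

section
/- Let X be a metrizable topological space and f : X → X a function whose set of periodic points {x ∈ X : ∃ n ≥ 1, fⁿ(x) = x} is countable. Let h : [0,1] × X → X be such that for every fixed x ∈ X the path t ↦ h(t, x) is continuous, for every t ∈ [0,1] the map h(t, ·) commutes with f (h(t, f(x)) = f(h(t, x)) for all x), and h(1, ·) is the identity of X. Then h(t, x) = x for every t ∈ [0,1] and every periodic point x of f (i.e., every x with fⁿ(x) = x for some n ≥ 1). -/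
open Set Filter Topology

/-!
Commuting with `f`, each `h t` maps points of period `n` to points of period `n`, so for a
periodic point `x` the path `t ↦ h t x` stays inside the countable set of periodic points.
A countable subset of a Tychonoff (e.g. metrizable) space is totally disconnected, so this path is
constant, and its value at `t = 1` is `x`.
-/

theorem IsPreconnected.apply_eq_of_countable_image {α Y : Type*} [TopologicalSpace α]
    [TopologicalSpace Y] [T35Space Y] {s : Set α} (hs : IsPreconnected s) {g : α → Y}
    (hg : ContinuousOn g s) (hcount : (g '' s).Countable) {a b : α} (ha : a ∈ s)
    (hb : b ∈ s) : g a = g b :=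
  have : TotallyDisconnectedSpace (g '' s) := hcount.totallySeparatedSpace.totallyDisconnectedSpace
  (totallyDisconnectedSpace_subtype_iff.mp this) _ subset_rfl (hs.image g hg)
    (mem_image_of_mem g ha) (mem_image_of_mem g hb)

/-- An isotopy `h` through maps commuting with `f`, ending at the identity, must fix every
periodic point of `f`, provided `f` has only countably many periodic points. -/
theorem isotopy_fixes_periodic_points
    {X : Type*} [TopologicalSpace X] [TopologicalSpace.MetrizableSpace X]
    (f : X → X)
    (hcount : Set.Countable {x : X | ∃ n : ℕ, 1 ≤ n ∧ f^[n] x = x})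
    (h : ℝ → X → X)
    (hcont : ∀ x : X, ContinuousOn (fun t => h t x) (Set.Icc (0 : ℝ) 1))
    (hcomm : ∀ t ∈ Set.Icc (0 : ℝ) 1, ∀ x : X, h t (f x) = f (h t x))
    (hone : h 1 = id) :
    ∀ t ∈ Set.Icc (0 : ℝ) 1, ∀ x : X, (∃ n : ℕ, 1 ≤ n ∧ f^[n] x = x) → h t x = x := by
  rintro t ht x ⟨n, hn, hx⟩
  have hpath_periodic :
      (fun s => h s x) '' Icc (0 : ℝ) 1 ⊆ {y | ∃ n, 1 ≤ n ∧ f^[n] y = y} := by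
    rintro _ ⟨s, hs, rfl⟩
    exact ⟨n, hn, Function.IsPeriodicPt.map hx (hcomm s hs)⟩
  have hpath_const := isPreconnected_Icc.apply_eq_of_countable_image (hcont x)
    (hcount.mono hpath_periodic) ht (right_mem_Icc.mpr zero_le_one)
  simpa [hone] using hpath_const
end

section
/- Let μ ∈ ℝ with μ > 1 and define f : ℝ∖{0} → ℝ∖{0} by f(x) = (1/μ)(x + 1/x) (note x + 1/x ≠ 0 for all real x ≠ 0, so all iterates are defined). Then for every x > 0 the iterates fⁿ(x) converge to 1/√(μ−1) as n → ∞, and for every x < 0 the iterates fⁿ(x) converge to −1/√(μ−1) as n → ∞. -/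
/-!
The Cayley transform `y = (x - p) / (x + p)` at the positive fixed point `p` of `f` identifies
`(0, ∞)` with `(-1, 1)`. Since `f x ∓ p = (x ∓ p) (x ∓ p⁻¹) / (μ x)`, it conjugates `f` to
`y ↦ y · (y - a) / (1 - a y)`, where `a` is the Cayley transform of `p⁻¹`; the second factor is an
automorphism of the disc, hence bounded away from `1` in modulus on `|y| ≤ |y₀|`, so `yₙ → 0`
geometrically. Negative orbits follow because `f` is odd.
-/

open Filter Topology

noncomputable def cayley (p x : ℝ) : ℝ := (x - p) / (x + p)

lemma abs_cayley_lt_one {p x : ℝ} (hp : 0 < p) (hx : 0 < x) : |cayley p x| < 1 := by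
  rw [cayley, abs_div, abs_of_pos (by positivity : 0 < x + p), div_lt_one (by positivity)]
  exact abs_sub_lt_of_nonneg_of_lt hx.le (by linarith) hp.le (by linarith)

lemma cayley_eq_moebius {p q x : ℝ} (hp : 0 < p) (hq : 0 < q) (hx : 0 < x) :
    cayley q x = (cayley p x - cayley p q) / (1 - cayley p q * cayley p x) := by
  have hden : 1 - cayley p q * cayley p x = 2 * p * (q + x) / ((q + p) * (x + p)) := by
    unfold cayley
    field_simp
    ring
  rw [hden]
  unfold cayley
  field_simp
  ring

lemma mul_one_add_cayley_div_one_sub_cayley {p x : ℝ} (hp : 0 < p) (hx : 0 < x) :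
    p * (1 + cayley p x) / (1 - cayley p x) = x := by
  have hxp : x + p ≠ 0 := by positivity
  have hplus : 1 + cayley p x = 2 * x / (x + p) := by
    unfold cayley; field_simp; ring
  have hminus : 1 - cayley p x = 2 * p / (x + p) := by
    unfold cayley; field_simp; ring
  rw [hplus, hminus]
  field_simp

lemma tendsto_of_tendsto_cayley_zero {p : ℝ} {u : ℕ → ℝ} (hp : 0 < p) (hu : ∀ n, 0 < u n)
    (h : Tendsto (fun n => cayley p (u n)) atTop (𝓝 0)) : Tendsto u atTop (𝓝 p) := by
  have hcont : ContinuousAt (fun y : ℝ => p * (1 + y) / (1 - y)) 0 := by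
    fun_prop (disch := norm_num)
  have := hcont.tendsto.comp h
  simpa only [Function.comp_def, mul_one_add_cayley_div_one_sub_cayley hp (hu _), add_zero,
    sub_zero, mul_one, div_one] using this

lemma sq_moebius_le {a y s : ℝ} (ha : a ^ 2 < 1) (hy : y ^ 2 ≤ s) (hs : s < 1) :
    ((y - a) / (1 - a * y)) ^ 2 ≤ 1 - (1 - a ^ 2) * (1 - s) / 4 := by
  have hay : (a * y) ^ 2 < 1 := by nlinarith
  have hD : 0 < 1 - a * y := by nlinarith
  have hD2 : (1 - a * y) ^ 2 ≤ 4 := by nlinarith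
  have hδ : 0 ≤ (1 - a ^ 2) * (1 - s) := by nlinarith
  rw [div_pow, div_le_iff₀ (by positivity)]
  -- `(1 - a y)² - (y - a)² = (1 - a²) (1 - y²)`
  nlinarith [mul_le_mul_of_nonneg_left hD2 hδ,
    mul_le_mul_of_nonneg_left hy (by linarith : 0 ≤ 1 - a ^ 2)]

lemma tendsto_zero_of_moebius_recursion {a : ℝ} {y : ℕ → ℝ} (ha : a ^ 2 < 1)
    (hy₀ : y 0 ^ 2 < 1) (hy : ∀ n, y (n + 1) = y n * ((y n - a) / (1 - a * y n))) :
    Tendsto y atTop (𝓝 0) := by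
  set c := 1 - (1 - a ^ 2) * (1 - y 0 ^ 2) / 4 with hc
  have hc₀ : 0 ≤ c := by nlinarith
  have hc₁ : c < 1 := by nlinarith
  have hbound : ∀ n, y n ^ 2 ≤ c ^ n * y 0 ^ 2 := by
    intro n
    induction n with
    | zero => simp
    | succ n ih =>
      have hyn : y n ^ 2 ≤ y 0 ^ 2 :=
        ih.trans (mul_le_of_le_one_left (sq_nonneg _) (pow_le_one₀ hc₀ hc₁.le))
      calc y (n + 1) ^ 2 = y n ^ 2 * ((y n - a) / (1 - a * y n)) ^ 2 := by rw [hy, mul_pow]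
        _ ≤ (c ^ n * y 0 ^ 2) * c :=
          mul_le_mul ih (sq_moebius_le ha hyn hy₀) (sq_nonneg _) (by positivity)
        _ = c ^ (n + 1) * y 0 ^ 2 := by ring
  have hsq : Tendsto (fun n => y n ^ 2) atTop (𝓝 0) :=
    squeeze_zero (fun n => sq_nonneg _) hbound
      (by simpa using (tendsto_pow_atTop_nhds_zero_of_lt_one hc₀ hc₁).mul_const (y 0 ^ 2))
  have habs := (Real.continuous_sqrt.tendsto 0).comp hsq
  simp only [Function.comp_def, Real.sqrt_sq_eq_abs, Real.sqrt_zero] at habs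
  exact (tendsto_zero_iff_abs_tendsto_zero y).mpr habs

lemma pos_of_one_div_mul_add_one_div_eq_self {μ p : ℝ} (hp : 0 < p)
    (hfix : 1 / μ * (p + 1 / p) = p) : 0 < μ := by
  by_contra! hμ
  have : 1 / μ * (p + 1 / p) ≤ 0 :=
    mul_nonpos_of_nonpos_of_nonneg (one_div_nonpos.2 hμ) (by positivity)
  linarith

lemma cayley_map_eq_mul_cayley_inv {μ p x : ℝ} (hp : 0 < p) (hfix : 1 / μ * (p + 1 / p) = p)
    (hx : 0 < x) : cayley p (1 / μ * (x + 1 / x)) = cayley p x * cayley p⁻¹ x := by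
  have hμ : 0 < μ := pos_of_one_div_mul_add_one_div_eq_self hp hfix
  have hμp : μ * p ^ 2 = p ^ 2 + 1 := by field_simp at hfix; linear_combination -hfix
  have hden : 0 < 1 / μ * (x + 1 / x) + p := by positivity
  unfold cayley
  rw [div_eq_iff hden.ne']
  field_simp
  linear_combination (-2 * x - 2 * x ^ 3) * hμp

lemma tendsto_iterate_of_pos {μ p x : ℝ} (hp : 0 < p) (hfix : 1 / μ * (p + 1 / p) = p)
    (hx : 0 < x) : Tendsto (fun n => (fun z => 1 / μ * (z + 1 / z))^[n] x) atTop (𝓝 p) := by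
  set f : ℝ → ℝ := fun z => 1 / μ * (z + 1 / z)
  have hμ : 0 < μ := pos_of_one_div_mul_add_one_div_eq_self hp hfix
  have hmaps : Set.MapsTo f (Set.Ioi 0) (Set.Ioi 0) := fun z (hz : 0 < z) => by
    simp only [f, Set.mem_Ioi]; positivity
  have horbit : ∀ n, 0 < f^[n] x := fun n => hmaps.iterate n hx
  have hpinv : 0 < p⁻¹ := inv_pos.2 hp
  refine tendsto_of_tendsto_cayley_zero hp horbit <|
    tendsto_zero_of_moebius_recursion (a := cayley p p⁻¹) ?_ ?_ fun n => ?_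
  · exact (sq_lt_one_iff_abs_lt_one _).2 (abs_cayley_lt_one hp hpinv)
  · exact (sq_lt_one_iff_abs_lt_one _).2 (abs_cayley_lt_one hp (horbit 0))
  · rw [Function.iterate_succ_apply', cayley_map_eq_mul_cayley_inv hp hfix (horbit n),
      cayley_eq_moebius hp hpinv (horbit n)]

/-- For `μ > 1` and `f(x) = (1/μ)(x + 1/x)`, every positive orbit converges to `1/√(μ−1)` and
every negative orbit converges to `−1/√(μ−1)`. -/
theorem orbits_converge_to_attracting_fixed_points
    (μ : ℝ) (hμ : 1 < μ) (f : ℝ → ℝ) (hf : f = fun x => (1 / μ) * (x + 1 / x)) :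
    (∀ x : ℝ, 0 < x →
      Filter.Tendsto (fun n : ℕ => f^[n] x) Filter.atTop (nhds (1 / Real.sqrt (μ - 1)))) ∧
    (∀ x : ℝ, x < 0 →
      Filter.Tendsto (fun n : ℕ => f^[n] x) Filter.atTop (nhds (-(1 / Real.sqrt (μ - 1))))) := by
  subst hf
  have hs : 0 < Real.sqrt (μ - 1) := Real.sqrt_pos.2 (by linarith)
  have hp : 0 < 1 / Real.sqrt (μ - 1) := by positivity
  have hfix : 1 / μ * (1 / Real.sqrt (μ - 1) + 1 / (1 / Real.sqrt (μ - 1))) =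
      1 / Real.sqrt (μ - 1) := by
    have := Real.sq_sqrt (by linarith : (0 : ℝ) ≤ μ - 1)
    field_simp
    linarith
  have hodd : Function.Commute (fun x : ℝ => 1 / μ * (x + 1 / x)) Neg.neg := fun x => by
    simp only [one_div, inv_neg]; ring
  refine ⟨fun x hx => tendsto_iterate_of_pos hp hfix hx, fun x hx => ?_⟩
  refine (tendsto_iterate_of_pos hp hfix (neg_pos.2 hx)).neg.congr fun n => ?_
  rw [← hodd.iterate_left n (-x), neg_neg]
end
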